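/- Let Gamma be a subgroup of GL_2(A), alpha in Gamma, omega in C with |omega|_i > 0, s in K, zeta in C with |zeta| = |zeta|_i = 1, and z_n = s + T^{-n} * zeta for natural numbers n (so |z_n - s| = |z_n - s|_i = q^{-n}). Assume there is a constant C_0 > 0 such that |F_{gamma,s}(z) - 1| <= (|z - s| * C_0) / (|z - gamma omega| * |c*omega + d|) for all gamma = [[a,b],[c,d]] in Gamma and all z in C with |z|_i > 0 and z ≠ gamma omega. Then for every epsilon > 0 there exists a natural number n_0 such that for all n >= n_0 and all gamma in Gamma: if |gamma omega|_i < q^{-n}, then z_n ≠ gamma omega and |F_{gamma,s}(z_n) - 1| <= epsilon. (Lemma 5.3 of the paper.) -/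

import Mathlib

open Polynomial Matrix
open scoped Classical

/-- The absolute value on `K_∞ = F_q((π))`: `|x| = q^{-v_∞(x)}`. -/
noncomputable def absK (Fq : Type*) [Field Fq] [Fintype Fq] (x : LaurentSeries Fq) : ℝ :=
  if x = 0 then 0 else (Fintype.card Fq : ℝ) ^ (-(HahnSeries.order x))

/-- The imaginary part `|z|_i = inf {|z - x| : x ∈ K_∞}` of an element of `C`. -/
noncomputable def imNorm (Fq : Type*) [Field Fq] {C : Type*} [NormedField C]
    [Algebra (LaurentSeries Fq) C] (z : C) : ℝ :=
  ⨅ x : LaurentSeries Fq, ‖z - algebraMap (LaurentSeries Fq) C x‖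

/-- The element `T = π⁻¹` of `K_∞ = F_q((π))`. -/
noncomputable def Tel (Fq : Type*) [Field Fq] : LaurentSeries Fq :=
  HahnSeries.single (-1 : ℤ) 1

/-- The embedding `A = F_q[T] → C`, sending `T` to `π⁻¹`. -/
noncomputable def polyEmb (Fq : Type*) [Field Fq] (C : Type*) [NormedField C]
    [Algebra (LaurentSeries Fq) C] : Polynomial Fq →+* C :=
  (algebraMap (LaurentSeries Fq) C).comp (Polynomial.aeval (Tel Fq)).toRingHom

/-- The action of `γ ∈ GL₂(A)` on `C` by fractional linear transformations. -/
noncomputable def act {Fq : Type*} [Field Fq] {C : Type*} [NormedField C]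
    [Algebra (LaurentSeries Fq) C] (g : GL (Fin 2) (Polynomial Fq)) (z : C) : C :=
  (polyEmb Fq C (g.val 0 0) * z + polyEmb Fq C (g.val 0 1)) /
    (polyEmb Fq C (g.val 1 0) * z + polyEmb Fq C (g.val 1 1))

section Aux

variable {Fq : Type*} [Field Fq] {C : Type*} [NormedField C] [Algebra (LaurentSeries Fq) C]

local notation "algC" => algebraMap (LaurentSeries Fq) C

lemma imNorm_le' (z : C) (x : LaurentSeries Fq) : imNorm Fq z ≤ ‖z - algC x‖ :=
  ciInf_le ⟨0, by rintro r ⟨y, rfl⟩; exact norm_nonneg _⟩ x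

lemma imNorm_nonneg' (z : C) : 0 ≤ imNorm Fq z :=
  le_ciInf fun _ => norm_nonneg _

lemma imNorm_le_norm' (z : C) : imNorm Fq z ≤ ‖z‖ := by
  have := imNorm_le' (Fq := Fq) z 0
  rwa [map_zero (algebraMap (LaurentSeries Fq) C), sub_zero] at this

lemma imNorm_add_alg (z : C) (x : LaurentSeries Fq) :
    imNorm Fq (z + algC x) = imNorm Fq z := by
  apply le_antisymm
  · apply le_ciInf; intro y
    calc imNorm Fq (z + algC x) ≤ ‖z + algC x - algC (y + x)‖ := imNorm_le' _ _
    _ = ‖z - algC y‖ := by rw [map_add]; congr 1; ring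
  · apply le_ciInf; intro y
    calc imNorm Fq z ≤ ‖z - algC (y - x)‖ := imNorm_le' _ _
    _ = ‖z + algC x - algC y‖ := by rw [map_sub]; congr 1; ring

lemma mul_imNorm_le (x : LaurentSeries Fq) (z : C) :
    ‖algC x‖ * imNorm Fq z ≤ imNorm Fq (algC x * z) := by
  rcases eq_or_ne x 0 with rfl | hx
  · rw [map_zero (algebraMap (LaurentSeries Fq) C), norm_zero, zero_mul, zero_mul]
    exact imNorm_nonneg' 0
  · apply le_ciInf; intro y
    have hxy : x * (y / x) = y := by field_simp
    have : algC x * z - algC y = algC x * (z - algC (y / x)) := by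
      rw [mul_sub, ← _root_.map_mul, hxy]
    rw [this, norm_mul]
    exact mul_le_mul_of_nonneg_left (imNorm_le' _ _) (norm_nonneg _)

lemma imNorm_le_norm_sub (hna : ∀ x y : C, ‖x + y‖ ≤ max ‖x‖ ‖y‖) {z w : C}
    (h : imNorm Fq w < imNorm Fq z) : imNorm Fq z ≤ ‖z - w‖ := by
  obtain ⟨x, hx⟩ := exists_lt_of_ciInf_lt h
  have h1 : imNorm Fq z ≤ ‖z - algC x‖ := imNorm_le' _ _
  have h2 : ‖z - algC x‖ ≤ max ‖z - w‖ ‖w - algC x‖ := by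
    have := hna (z - w) (w - algC x)
    rwa [sub_add_sub_cancel] at this
  rcases le_max_iff.mp (h1.trans h2) with h3 | h3
  · exact h3
  · exact absurd (h3.trans_lt hx) (lt_irrefl _)

lemma key_ineq (hna : ∀ x y : C, ‖x + y‖ ≤ max ‖x‖ ‖y‖)
    (A B c d : LaurentSeries Fq) (ω : C) :
    imNorm Fq ω * ‖algC (A * d - B * c)‖ ≤
      ‖algC A * ω + algC B‖ * ‖algC c * ω + algC d‖ := by
  set P := algC A * ω + algC B with hP
  set Q := algC c * ω + algC d with hQ
  have hΔ : algC (A * d - B * c) = algC A * Q + -(algC c * P) := by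
    rw [hP, hQ]; simp only [map_sub, _root_.map_mul]; ring
  have h1 : ‖algC (A * d - B * c)‖ ≤ max (‖algC A‖ * ‖Q‖) (‖algC c‖ * ‖P‖) := by
    rw [hΔ]
    refine (hna _ _).trans ?_
    rw [norm_neg, norm_mul, norm_mul]
  have hPA : ‖algC A‖ * imNorm Fq ω ≤ ‖P‖ := by
    have h2 : ‖algC A‖ * imNorm Fq ω ≤ imNorm Fq (algC A * ω) := mul_imNorm_le A ω
    have h3 : imNorm Fq (algC A * ω) = imNorm Fq P := (imNorm_add_alg _ B).symm
    exact (h2.trans h3.le).trans (imNorm_le_norm' P)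
  have hQc : ‖algC c‖ * imNorm Fq ω ≤ ‖Q‖ := by
    have h2 : ‖algC c‖ * imNorm Fq ω ≤ imNorm Fq (algC c * ω) := mul_imNorm_le c ω
    have h3 : imNorm Fq (algC c * ω) = imNorm Fq Q := (imNorm_add_alg _ d).symm
    exact (h2.trans h3.le).trans (imNorm_le_norm' Q)
  have hI := imNorm_nonneg' (Fq := Fq) ω
  rcases le_max_iff.mp h1 with h | h
  · calc imNorm Fq ω * ‖algC (A * d - B * c)‖
        ≤ imNorm Fq ω * (‖algC A‖ * ‖Q‖) := mul_le_mul_of_nonneg_left h hI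
    _ = (‖algC A‖ * imNorm Fq ω) * ‖Q‖ := by ring
    _ ≤ ‖P‖ * ‖Q‖ := mul_le_mul_of_nonneg_right hPA (norm_nonneg Q)
  · calc imNorm Fq ω * ‖algC (A * d - B * c)‖
        ≤ imNorm Fq ω * (‖algC c‖ * ‖P‖) := mul_le_mul_of_nonneg_left h hI
    _ = (‖algC c‖ * imNorm Fq ω) * ‖P‖ := by ring
    _ ≤ ‖Q‖ * ‖P‖ := mul_le_mul_of_nonneg_right hQc (norm_nonneg P)
    _ = ‖P‖ * ‖Q‖ := mul_comm _ _

end Aux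

section Aux2

variable {Fq : Type*} [Field Fq] [Fintype Fq] {C : Type*} [NormedField C]
  [Algebra (LaurentSeries Fq) C]

local notation "algC" => algebraMap (LaurentSeries Fq) C

lemma algC_single (r : Fq) : algebraMap Fq (LaurentSeries Fq) r = HahnSeries.single 0 r := by
  have : algebraMap Fq (LaurentSeries Fq) r
      = HahnSeries.ofPowerSeries ℤ Fq (PowerSeries.C r) := rfl
  rw [this, HahnSeries.ofPowerSeries_C, HahnSeries.C_apply]

lemma norm_polyEmb_det (hext : ∀ x : LaurentSeries Fq, ‖algC x‖ = absK Fq x)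
    (γ : GL (Fin 2) (Polynomial Fq)) :
    ‖polyEmb Fq C (γ.val).det‖ = 1 := by
  obtain ⟨r, hr, hCr⟩ := Polynomial.isUnit_iff.mp
    ((Matrix.isUnit_iff_isUnit_det _).mp γ.isUnit)
  have hr0 : r ≠ 0 := hr.ne_zero
  rw [← hCr]
  show ‖algC (aeval (Tel Fq) (Polynomial.C r))‖ = 1
  rw [hext, aeval_C, algC_single, absK]
  rw [if_neg (HahnSeries.single_ne_zero hr0), HahnSeries.order_single hr0]
  norm_num

lemma act_lower (hna : ∀ x y : C, ‖x + y‖ ≤ max ‖x‖ ‖y‖)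
    (hext : ∀ x : LaurentSeries Fq, ‖algC x‖ = absK Fq x)
    (γ : GL (Fin 2) (Polynomial Fq)) (ω : C) (hω : 0 < imNorm Fq ω) :
    polyEmb Fq C (γ.val 1 0) * ω + polyEmb Fq C (γ.val 1 1) ≠ 0 ∧
    imNorm Fq ω ≤ imNorm Fq (act γ ω) *
      ‖polyEmb Fq C (γ.val 1 0) * ω + polyEmb Fq C (γ.val 1 1)‖ ^ 2 := by
  set a' := aeval (Tel Fq) (γ.val 0 0) with ha'
  set b' := aeval (Tel Fq) (γ.val 0 1) with hb'
  set c' := aeval (Tel Fq) (γ.val 1 0) with hc'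
  set d' := aeval (Tel Fq) (γ.val 1 1) with hd'
  have hpe : ∀ p : Polynomial Fq, polyEmb Fq C p = algC (aeval (Tel Fq) p) := fun p => rfl
  have hdet : a' * d' - b' * c' = aeval (Tel Fq) (γ.val).det := by
    rw [Matrix.det_fin_two, map_sub, _root_.map_mul, _root_.map_mul]
  have hdet1 : ‖algC (a' * d' - b' * c')‖ = 1 := by
    rw [hdet, ← hpe]; exact norm_polyEmb_det hext γ
  have hQ0 : algC c' * ω + algC d' ≠ 0 := by
    intro h0
    have hk := key_ineq hna a' b' c' d' ω
    rw [hdet1, mul_one, h0, norm_zero, mul_zero] at hk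
    exact absurd (lt_of_lt_of_le hω hk) (lt_irrefl _)
  have hQ0' : polyEmb Fq C (γ.val 1 0) * ω + polyEmb Fq C (γ.val 1 1) ≠ 0 := by
    rw [hpe, hpe, ← hc', ← hd']; exact hQ0
  refine ⟨hQ0', ?_⟩
  set k := ‖algC c' * ω + algC d'‖ with hkdef
  have hk : 0 < k := norm_pos_iff.mpr hQ0
  have hact : act γ ω = (algC a' * ω + algC b') / (algC c' * ω + algC d') := by
    rw [act, hpe, hpe, hpe, hpe]
  have hstep : imNorm Fq ω / k ^ 2 ≤ imNorm Fq (act γ ω) := by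
    apply le_ciInf
    intro x
    have hrepr : act γ ω - algC x =
        (algC (a' - x * c') * ω + algC (b' - x * d')) / (algC c' * ω + algC d') := by
      rw [hact, eq_div_iff hQ0, sub_mul, div_mul_cancel₀ _ hQ0]
      simp only [map_sub, _root_.map_mul]
      ring
    have hkey := key_ineq hna (a' - x * c') (b' - x * d') c' d' ω
    have hΔ' : (a' - x * c') * d' - (b' - x * d') * c' = a' * d' - b' * c' := by ring
    rw [hΔ', hdet1, mul_one] at hkey
    rw [hrepr, norm_div, ← hkdef]
    rw [div_le_div_iff₀ (by positivity) (by positivity)]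
    calc imNorm Fq ω * k ≤ (‖algC (a' - x * c') * ω + algC (b' - x * d')‖ * k) * k :=
          mul_le_mul_of_nonneg_right hkey hk.le
    _ = ‖algC (a' - x * c') * ω + algC (b' - x * d')‖ * k ^ 2 := by ring
  have := (div_le_iff₀ (by positivity)).mp hstep
  calc imNorm Fq ω ≤ imNorm Fq (act γ ω) * k ^ 2 := this
  _ = imNorm Fq (act γ ω) *
      ‖polyEmb Fq C (γ.val 1 0) * ω + polyEmb Fq C (γ.val 1 1)‖ ^ 2 := by
      rw [hkdef, hpe, hpe]

end Aux2

/-- **Lemma 5.3.**  With `z_n = s + T^{-n}·ζ` (`|ζ| = |ζ|_i = 1`), if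
`|F_{γ,s}(z) - 1| ≤ |z - s|·C₀ / (|z - γω|·|c·ω + d|)` holds for all `γ ∈ Γ` and all
`z` with `|z|_i > 0`, `z ≠ γω`, then for every `ε > 0` there is `n₀` such that for all
`n ≥ n₀` and all `γ ∈ Γ` with `|γω|_i < q^{-n}` one has `z_n ≠ γω` and
`|F_{γ,s}(z_n) - 1| ≤ ε`. -/
theorem F_gamma_small_imaginary {Fq : Type*} [Field Fq] [Fintype Fq]
    {C : Type*} [NormedField C] [Algebra (LaurentSeries Fq) C]
    (hna : ∀ x y : C, ‖x + y‖ ≤ max ‖x‖ ‖y‖)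
    (hext : ∀ x : LaurentSeries Fq, ‖algebraMap (LaurentSeries Fq) C x‖ = absK Fq x)
    (Γ : Subgroup (GL (Fin 2) (Polynomial Fq))) (α : GL (Fin 2) (Polynomial Fq)) (hα : α ∈ Γ)
    (ω : C) (hω : 0 < imNorm Fq ω)
    (s : C) (hs : ∃ p r : Polynomial Fq, r ≠ 0 ∧ s = polyEmb Fq C p / polyEmb Fq C r)
    (ζ : C) (hζ : ‖ζ‖ = 1) (hζi : imNorm Fq ζ = 1)
    (zseq : ℕ → C) (hz : ∀ n : ℕ, zseq n = s + (polyEmb Fq C Polynomial.X)⁻¹ ^ n * ζ)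
    (C₀ : ℝ) (hC₀ : 0 < C₀)
    (hbd : ∀ γ ∈ Γ, ∀ z : C, 0 < imNorm Fq z → z ≠ act γ ω →
      ‖((s - act γ ω) * (z - act γ (act α ω))) /
          ((s - act γ (act α ω)) * (z - act γ ω)) - 1‖
        ≤ ‖z - s‖ * C₀ /
            (‖z - act γ ω‖ * ‖polyEmb Fq C (γ.val 1 0) * ω + polyEmb Fq C (γ.val 1 1)‖)) :
    ∀ ε : ℝ, 0 < ε → ∃ n₀ : ℕ, ∀ n ≥ n₀, ∀ γ ∈ Γ,
      imNorm Fq (act γ ω) < (Fintype.card Fq : ℝ) ^ (-(n : ℤ)) →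
      zseq n ≠ act γ ω ∧
      ‖((s - act γ ω) * (zseq n - act γ (act α ω))) /
          ((s - act γ (act α ω)) * (zseq n - act γ ω)) - 1‖ ≤ ε := by
  intro ε hε
  set q : ℝ := (Fintype.card Fq : ℝ) with hqdef
  have hq : (1 : ℝ) < q := by
    rw [hqdef]; exact_mod_cast Fintype.one_lt_card
  have hq0 : (0 : ℝ) < q := lt_trans one_pos hq
  set I : ℝ := imNorm Fq ω with hIdef
  -- norm of Tel
  have hTel0 : (Tel Fq) ≠ 0 := HahnSeries.single_ne_zero one_ne_zero
  have hTel : ‖algebraMap (LaurentSeries Fq) C (Tel Fq)‖ = q := by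
    rw [hext, absK, if_neg hTel0, Tel, HahnSeries.order_single one_ne_zero]
    norm_num
    exact hqdef.symm
  have hX : polyEmb Fq C Polynomial.X = algebraMap (LaurentSeries Fq) C (Tel Fq) := by
    show algebraMap (LaurentSeries Fq) C (aeval (Tel Fq) Polynomial.X) = _
    rw [aeval_X]
  -- s is in the image of K_∞
  obtain ⟨p, r, hr, hs'⟩ := hs
  have hsσ : s = algebraMap (LaurentSeries Fq) C (aeval (Tel Fq) p / aeval (Tel Fq) r) := by
    rw [hs', map_div₀]; rfl
  set σ : LaurentSeries Fq := aeval (Tel Fq) p / aeval (Tel Fq) r with hσdef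
  -- z_n - s
  have ht : ∀ n : ℕ, (polyEmb Fq C Polynomial.X)⁻¹ ^ n
      = algebraMap (LaurentSeries Fq) C ((Tel Fq)⁻¹ ^ n) := by
    intro n
    rw [map_pow, map_inv₀, hX]
  have htn : ∀ n : ℕ, ‖algebraMap (LaurentSeries Fq) C ((Tel Fq)⁻¹ ^ n)‖ = q⁻¹ ^ n := by
    intro n
    rw [map_pow, map_inv₀, norm_pow, norm_inv, hTel]
  have hzs : ∀ n : ℕ, ‖zseq n - s‖ = q⁻¹ ^ n := by
    intro n
    rw [hz n, add_sub_cancel_left, norm_mul, ht n, htn n, hζ, mul_one]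
  have himz : ∀ n : ℕ, q⁻¹ ^ n ≤ imNorm Fq (zseq n) := by
    intro n
    have hrw : zseq n = algebraMap (LaurentSeries Fq) C ((Tel Fq)⁻¹ ^ n) * ζ
        + algebraMap (LaurentSeries Fq) C σ := by
      rw [hz n, ht n, hsσ]; ring
    rw [hrw, imNorm_add_alg]
    have := mul_imNorm_le ((Tel Fq)⁻¹ ^ n) ζ
    rwa [htn n, hζi, mul_one] at this
  have hqn : ∀ n : ℕ, (Fintype.card Fq : ℝ) ^ (-(n : ℤ)) = q⁻¹ ^ n := by
    intro n
    rw [← hqdef, _root_.zpow_neg, zpow_natCast, inv_pow]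
  obtain ⟨n₀, hn₀⟩ := pow_unbounded_of_one_lt ((C₀ / ε) ^ 2 / I) hq
  refine ⟨n₀, fun n hn γ hγ hγω => ?_⟩
  rw [hqn n] at hγω
  have hpow : (0 : ℝ) < q⁻¹ ^ n := by positivity
  have hqpow : (0 : ℝ) < q ^ n := by positivity
  have hins : imNorm Fq (act γ ω) < imNorm Fq (zseq n) := lt_of_lt_of_le hγω (himz n)
  have hne : zseq n ≠ act γ ω := by
    intro h; rw [h] at hins; exact lt_irrefl _ hins
  obtain ⟨hQ0, hlow⟩ := act_lower hna hext γ ω hω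
  set k : ℝ := ‖polyEmb Fq C (γ.val 1 0) * ω + polyEmb Fq C (γ.val 1 1)‖ with hkdef
  have hk : 0 < k := norm_pos_iff.mpr hQ0
  -- k is large
  have hk2 : (C₀ / ε) ^ 2 < k ^ 2 := by
    have h1 : I < q⁻¹ ^ n * k ^ 2 :=
      lt_of_le_of_lt hlow (mul_lt_mul_of_pos_right hγω (by positivity))
    have h2 : I * q ^ n < k ^ 2 := by
      have : q⁻¹ ^ n * k ^ 2 = k ^ 2 / q ^ n := by
        rw [inv_pow]; ring
      rw [this] at h1
      exact (lt_div_iff₀ hqpow).mp h1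
    have h3 : (C₀ / ε) ^ 2 < I * q ^ n := by
      have hqmono : q ^ n₀ ≤ q ^ n := pow_le_pow_right₀ hq.le hn
      have := (div_lt_iff₀ hω).mp (hn₀.trans_le hqmono)
      linarith [this]
    exact h3.trans h2
  have hkC : C₀ / ε < k := lt_of_pow_lt_pow_left₀ 2 hk.le hk2
  have hfin : C₀ / k ≤ ε := by
    have h4 : C₀ < k * ε := (div_lt_iff₀ hε).mp hkC
    exact le_of_lt ((div_lt_iff₀ hk).mpr (by linarith))
  refine ⟨hne, ?_⟩
  have hmain := hbd γ hγ (zseq n) (lt_of_lt_of_le hpow (himz n)) hne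
  refine hmain.trans ?_
  rw [hzs n, ← hkdef]
  have hzlow : q⁻¹ ^ n ≤ ‖zseq n - act γ ω‖ :=
    le_trans (himz n) (imNorm_le_norm_sub hna hins)
  calc q⁻¹ ^ n * C₀ / (‖zseq n - act γ ω‖ * k)
      ≤ q⁻¹ ^ n * C₀ / (q⁻¹ ^ n * k) := by
        apply div_le_div_of_nonneg_left (by positivity) (by positivity)
        exact mul_le_mul_of_nonneg_right hzlow hk.le
  _ = C₀ / k := by
        rw [mul_div_mul_left _ _ (ne_of_gt hpow)]
  _ ≤ ε := hfin
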